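/- A least-squares estimate is unchanged by deleting a data point if and only if that data point has zero residual: let X be an n × d real matrix with A = XᵀX invertible, Y ∈ ℝ^n, x ∈ ℝ^d with x ≠ 0, y ∈ ℝ, and let β̂₊ be the least-squares estimate for the data (X̃, Ỹ) obtained by appending row xᵀ to X and entry y to Y, and β̂ = A⁻¹XᵀY the estimate without that row. Then β̂ = β̂₊ if and only if y = xᵀβ̂₊. -/

import Mathlib

/-!
Appending the row `(x, y)` turns the normal equations into
`(XᵀX + x xᵀ) β̂₊ = XᵀY + y x`, i.e. `XᵀX β̂₊ - XᵀY = (y - xᵀβ̂₊) x`. As `x ≠ 0`, the left side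
vanishes (which, `XᵀX` being invertible, says `β̂ = β̂₊`) exactly when the residual `y - xᵀβ̂₊`
does. The augmented Gram matrix is invertible, being positive definite plus positive semidefinite.
-/

open Matrix

namespace Matrix

section Snoc

variable {R : Type*} [CommSemiring R] {n d : ℕ}

theorem of_snoc_transpose_mul_self (X : Matrix (Fin n) (Fin d) R) (x : Fin d → R) :
    (of (Fin.snoc (of.symm X) x) : Matrix (Fin (n + 1)) (Fin d) R)ᵀ * of (Fin.snoc (of.symm X) x)
      = Xᵀ * X + vecMulVec x x := by
  ext i j
  simp [mul_apply, vecMulVec_apply, Fin.sum_univ_castSucc]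

theorem of_snoc_transpose_mulVec_snoc (X : Matrix (Fin n) (Fin d) R) (x : Fin d → R)
    (Y : Fin n → R) (y : R) :
    (of (Fin.snoc (of.symm X) x) : Matrix (Fin (n + 1)) (Fin d) R)ᵀ *ᵥ Fin.snoc Y y
      = Xᵀ *ᵥ Y + y • x := by
  ext i
  simp [mulVec, dotProduct, Fin.sum_univ_castSucc, mul_comm]

end Snoc

variable {m n : Type*} [Fintype m] [Fintype n] [DecidableEq n]

theorem posDef_transpose_mul_self_of_isUnit_det {X : Matrix m n ℝ} (hX : IsUnit (Xᵀ * X).det) :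
    (Xᵀ * X).PosDef :=
  (posSemidef_conjTranspose_mul_self X).posDef_iff_isUnit.mpr ((isUnit_iff_isUnit_det _).mpr hX)

theorem PosDef.isUnit_det_add_vecMulVec_self {A : Matrix n n ℝ} (hA : A.PosDef) (x : n → ℝ) :
    IsUnit (A + vecMulVec x x).det :=
  (isUnit_iff_isUnit_det _).mp (hA.add_posSemidef (posSemidef_vecMulVec_self_star x)).isUnit

theorem inv_mulVec_eq_iff_eq_mulVec {K : Type*} [Field K] {A : Matrix n n K} (hA : IsUnit A.det)
    {u v : n → K} : A⁻¹ *ᵥ u = v ↔ u = A *ᵥ v :=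
  ⟨fun h => by rw [← h, mulVec_mulVec, mul_nonsing_inv _ hA, one_mulVec],
   fun h => by rw [h, mulVec_mulVec, nonsing_inv_mul _ hA, one_mulVec]⟩

theorem inv_mulVec_eq_iff_of_add_vecMulVec_mulVec_eq {K : Type*} [Field K] {A : Matrix n n K}
    (hA : IsUnit A.det) {x : n → K} (hx : x ≠ 0) {b β : n → K} {y : K}
    (hβ : (A + vecMulVec x x) *ᵥ β = b + y • x) :
    A⁻¹ *ᵥ b = β ↔ y = x ⬝ᵥ β := by
  rw [add_mulVec, vecMulVec_mulVec, op_smul_eq_smul] at hβ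
  calc A⁻¹ *ᵥ b = β ↔ b = A *ᵥ β := inv_mulVec_eq_iff_eq_mulVec hA
    _ ↔ (x ⬝ᵥ β) • x = y • x := by
      constructor
      · rintro rfl
        exact add_left_cancel hβ
      · intro h
        rw [h] at hβ
        exact (add_right_cancel hβ).symm
    _ ↔ y = x ⬝ᵥ β := (smul_left_injective K hx).eq_iff.trans eq_comm

end Matrix

/-- A least-squares estimate is unchanged by deleting a data point if and only if that
data point has zero residual: with `A = XᵀX` invertible and `x ≠ 0`, the estimate
`β̂ = A⁻¹XᵀY` equals the estimate `β̂₊` for the data augmented by the row `(x, y)` if and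
only if `y = xᵀβ̂₊`. -/
theorem stmt_9 (n d : ℕ) (X : Matrix (Fin n) (Fin d) ℝ) (Y : Fin n → ℝ)
    (hA : IsUnit (Xᵀ * X).det) (x : Fin d → ℝ) (hx : x ≠ 0) (y : ℝ) :
    let A : Matrix (Fin d) (Fin d) ℝ := Xᵀ * X
    let Xt : Matrix (Fin (n + 1)) (Fin d) ℝ := Matrix.of (Fin.snoc (Matrix.of.symm X) x)
    let Yt : Fin (n + 1) → ℝ := Fin.snoc Y y
    let βplus : Fin d → ℝ := (Xtᵀ * Xt)⁻¹ *ᵥ (Xtᵀ *ᵥ Yt)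
    A⁻¹ *ᵥ (Xᵀ *ᵥ Y) = βplus ↔ y = x ⬝ᵥ βplus := by
  intro A Xt Yt βplus
  have hGram : Xtᵀ * Xt = A + vecMulVec x x := of_snoc_transpose_mul_self X x
  have hGram_unit : IsUnit (A + vecMulVec x x).det :=
    (posDef_transpose_mul_self_of_isUnit_det hA).isUnit_det_add_vecMulVec_self x
  have hNormal : (A + vecMulVec x x) *ᵥ βplus = Xᵀ *ᵥ Y + y • x := by
    rw [← of_snoc_transpose_mulVec_snoc X x Y y, eq_comm, ← inv_mulVec_eq_iff_eq_mulVec hGram_unit,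
      ← hGram]
  exact inv_mulVec_eq_iff_of_add_vecMulVec_mulVec_eq hA hx hNormal
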